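/- Let p and q be distinct primes, let V be a nontrivial finite-dimensional vector space over the field with p elements, let C be a cyclic group of order q, and let C act on V by linear automorphisms so that the action is faithful and the only C-invariant subspaces of V are 0 and V. Then the semidirect product V ⋊ C is a Schmidt (p,q)-group. -/

import Mathlib

/-- A Schmidt group: a finite non-nilpotent group all of whose proper subgroups are nilpotent. -/
def IsSchmidtGroup (G : Type*) [Group G] : Prop :=
  Finite G ∧ ¬ Group.IsNilpotent G ∧ ∀ H : Subgroup G, H ≠ ⊤ → Group.IsNilpotent H

/-- A Schmidt `(p, q)`-group: a Schmidt group whose order is divisible by no primes other than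
`p` and `q` and whose Sylow `p`-subgroup is normal. -/
def IsSchmidtPQGroup (p q : ℕ) (G : Type*) [Group G] : Prop :=
  IsSchmidtGroup G ∧ (∀ r : ℕ, r.Prime → r ∣ Nat.card G → r = p ∨ r = q) ∧
    ∀ P : Sylow p G, (P : Subgroup G).Normal

/-- `G` contains a Schmidt `(p, q)`-subgroup. -/
def HasSchmidtPQSubgroup (p q : ℕ) (G : Type*) [Group G] : Prop :=
  ∃ H : Subgroup G, IsSchmidtPQGroup p q H

/-- The multiplicative version of an additive automorphism group. -/
def addAutToMulAut (A : Type*) [AddGroup A] : Multiplicative (AddAut A) →* MulAut (Multiplicative A) where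
  toFun e := AddEquiv.toMultiplicative e.toAdd
  map_one' := rfl
  map_mul' _ _ := rfl

/-!
The image `N` of `V` is a normal abelian `p`-subgroup of index `q`, hence the unique Sylow
`p`-subgroup. If `V ⋊ C` were nilpotent, its Sylow `q`-subgroups would be normal as well and would
commute with `N`, so `C` would act trivially. A proper subgroup `H` either lies in `N`, or maps onto
`C`; then `H ∩ N` is a `C`-invariant subspace, so by irreducibility it is trivial (and `H` embeds
into the abelian group `C`) or all of `N` (and `H` is the whole group).
-/

theorem Group.isNilpotent_of_injective {H K : Type*} [Group H] [Group K] [IsMulCommutative K]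
    (f : H →* K) (hf : Function.Injective f) : Group.IsNilpotent H := by
  open scoped IsMulCommutative in
  exact Subgroup.isNilpotent_of_ker_le_center f
    (by rw [(MonoidHom.ker_eq_bot_iff f).mpr hf]; exact bot_le)

namespace SemidirectProduct

section Group

variable {N G : Type*} [Group N] [Group G] {φ : G →* MulAut N}

instance [Finite N] [Finite G] : Finite (N ⋊[φ] G) :=
  Finite.of_equiv _ equivProd.symm

instance normal_range_inl : (inl : N →* N ⋊[φ] G).range.Normal :=
  range_inl_eq_ker_rightHom (φ := φ) ▸ rightHom.normal_ker

theorem isPGroup_range_inl {p : ℕ} (hN : IsPGroup p N) :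
    IsPGroup p (inl : N →* N ⋊[φ] G).range :=
  hN.of_surjective _ inl.rangeRestrict_surjective

theorem isPGroup_range_inr {q : ℕ} (hG : IsPGroup q G) :
    IsPGroup q (inr : G →* N ⋊[φ] G).range :=
  hG.of_surjective _ inr.rangeRestrict_surjective

theorem index_range_inl : (inl : N →* N ⋊[φ] G).range.index = Nat.card G := by
  rw [range_inl_eq_ker_rightHom, Subgroup.index_ker,
    MonoidHom.range_eq_top.mpr rightHom_surjective, Subgroup.card_top]

theorem sylow_eq_range_inl {p : ℕ} [Fact p.Prime] [Finite N] [Finite G] (hN : IsPGroup p N)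
    (hG : ¬ p ∣ Nat.card G) (P : Sylow p (N ⋊[φ] G)) :
    (P : Subgroup (N ⋊[φ] G)) = inl.range := by
  let S := (isPGroup_range_inl (φ := φ) hN).toSylow (index_range_inl (φ := φ) ▸ hG)
  have := Sylow.unique_of_normal S (by simpa [S] using normal_range_inl)
  rw [Subsingleton.elim P S, IsPGroup.toSylow_coe]

theorem eq_one_of_isNilpotent {p q : ℕ} [Fact p.Prime] [Fact q.Prime] (hpq : p ≠ q)
    [Finite N] [Finite G] (hN : IsPGroup p N) (hG : IsPGroup q G)
    (hnil : Group.IsNilpotent (N ⋊[φ] G)) : φ = 1 := by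
  obtain ⟨Q, hQ⟩ := (isPGroup_range_inr (φ := φ) hG).exists_le_sylow
  have hdisj : Disjoint inl.range (Q : Subgroup (N ⋊[φ] G)) :=
    IsPGroup.disjoint_of_ne p q hpq _ _ (isPGroup_range_inl hN) Q.isPGroup'
  ext g n
  have hcomm : Commute (inl n) (inr g) := Subgroup.commute_of_normal_of_disjoint _ _
    normal_range_inl inferInstance hdisj _ _ ⟨n, rfl⟩ (hQ ⟨g, rfl⟩)
  apply inl_injective (φ := φ)
  rw [inl_aut, ← hcomm.eq, map_inv, mul_inv_cancel_right]
  rfl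

theorem eq_top_of_range_inl_le {H : Subgroup (N ⋊[φ] G)} (hinl : inl.range ≤ H)
    (hH : H.map rightHom = ⊤) : H = ⊤ := by
  have hker : H ⊔ (rightHom : N ⋊[φ] G →* G).ker = H :=
    sup_eq_left.mpr (range_inl_eq_ker_rightHom (φ := φ) ▸ hinl)
  rw [← hker, ← Subgroup.comap_map_eq, hH, Subgroup.comap_top]

end Group

section CommGroup

variable {N G : Type*} [CommGroup N] [Group G] {φ : G →* MulAut N}

theorem mul_inl_mul_inv (g : N ⋊[φ] G) (n : N) : g * inl n * g⁻¹ = inl (φ g.right n) := by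
  ext
  · simp only [mul_left, mul_right, inv_left, left_inl, right_inl, mul_one]
    rw [mul_comm g.left, mul_assoc]
    simp
  · simp [mul_right, inv_right]

theorem inl_aut_mem_of_map_rightHom_eq_top {H : Subgroup (N ⋊[φ] G)} (hH : H.map rightHom = ⊤)
    (g : G) {n : N} (hn : inl n ∈ H) : inl (φ g n) ∈ H := by
  obtain ⟨h, hh, rfl⟩ : g ∈ H.map rightHom := hH ▸ Subgroup.mem_top g
  rw [rightHom_eq_right, ← mul_inl_mul_inv]
  exact H.mul_mem (H.mul_mem hh hn) (H.inv_mem hh)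

theorem range_inl_le_or_disjoint
    (hirr : ∀ K : Subgroup N, (∀ g : G, ∀ n ∈ K, φ g n ∈ K) → K = ⊥ ∨ K = ⊤)
    {H : Subgroup (N ⋊[φ] G)} (hH : H.map rightHom = ⊤) :
    inl.range ≤ H ∨ Disjoint H inl.range := by
  rcases hirr (H.comap inl) (fun g _ ↦ inl_aut_mem_of_map_rightHom_eq_top hH g) with hbot | htop
  · right
    rw [Subgroup.disjoint_def]
    rintro _ hn ⟨n, rfl⟩
    rw [show n = 1 from (Subgroup.mem_bot).mp (hbot ▸ Subgroup.mem_comap.mpr hn), map_one]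
  · left
    rw [MonoidHom.range_eq_map, Subgroup.map_le_iff_le_comap, htop]

theorem isNilpotent_of_ne_top [IsMulCommutative G] [Fact (Nat.card G).Prime]
    (hirr : ∀ K : Subgroup N, (∀ g : G, ∀ n ∈ K, φ g n ∈ K) → K = ⊥ ∨ K = ⊤)
    {H : Subgroup (N ⋊[φ] G)} (hH : H ≠ ⊤) : Group.IsNilpotent H := by
  rcases (H.map rightHom).eq_bot_or_eq_top_of_prime_card with hbot | htop
  · have hle : H ≤ inl.range :=
      range_inl_eq_ker_rightHom (φ := φ) ▸ (Subgroup.map_eq_bot_iff _).mp hbot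
    exact Group.isNilpotent_of_injective _ (Subgroup.inclusion_injective hle)
  · rcases range_inl_le_or_disjoint hirr htop with hle | hdisj
    · exact absurd (eq_top_of_range_inl_le hle htop) hH
    · refine Group.isNilpotent_of_injective (rightHom.comp H.subtype) <|
        (injective_iff_map_eq_one _).mpr fun x hx ↦ Subtype.ext ?_
      exact Subgroup.disjoint_def.mp hdisj x.2 (range_inl_eq_ker_rightHom (φ := φ) ▸ hx)

end CommGroup

end SemidirectProduct

theorem eq_bot_or_eq_top_of_forall_smul_mem {p : ℕ} {V C : Type*} [AddCommGroup V]
    [Module (ZMod p) V] [Group C] [DistribMulAction C V]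
    (hirr : ∀ W : Submodule (ZMod p) V, (∀ c : C, ∀ v ∈ W, c • v ∈ W) → W = ⊥ ∨ W = ⊤)
    (K : Subgroup (Multiplicative V))
    (hK : ∀ c : C, ∀ v ∈ K, (addAutToMulAut V).comp (DistribMulAction.toAddAut C V) c v ∈ K) :
    K = ⊥ ∨ K = ⊤ := by
  let e : Subgroup (Multiplicative V) ≃o Submodule (ZMod p) V :=
    Subgroup.toAddSubgroup'.trans (AddSubgroup.toZModSubmodule p)
  refine (hirr (e K) fun c v hv ↦ hK c (.ofAdd v) hv).imp (fun h ↦ ?_) (fun h ↦ ?_)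
  · exact e.injective (h.trans e.map_bot.symm)
  · exact e.injective (h.trans e.map_top.symm)

theorem statement_9_general (p q : ℕ) (hp : p.Prime) (hq : q.Prime) (hpq : p ≠ q)
    (V : Type) [AddCommGroup V] [Module (ZMod p) V] [Module.Finite (ZMod p) V]
    (C : Type) [Group C] (hC : IsCyclic C) (hcard : Nat.card C = q)
    [DistribMulAction C V]
    (hfaithful : ∀ c : C, (∀ v : V, c • v = v) → c = 1)
    (hirr : ∀ W : Submodule (ZMod p) V, (∀ c : C, ∀ v ∈ W, c • v ∈ W) → W = ⊥ ∨ W = ⊤) :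
    IsSchmidtPQGroup p q
      (SemidirectProduct (Multiplicative V) C
        ((addAutToMulAut V).comp (DistribMulAction.toAddAut C V))) := by
  have := Fact.mk hp
  have := Fact.mk hq
  have := Fact.mk (hcard ▸ hq)
  have := hC
  have : Finite V := Module.finite_of_finite (ZMod p)
  have : Finite C := Nat.finite_of_card_ne_zero (hcard ▸ hq.ne_zero)
  have : Nontrivial C := Finite.one_lt_card_iff_nontrivial.mp (hcard ▸ hq.one_lt)
  obtain ⟨n, hVcard⟩ : ∃ n, Nat.card (Multiplicative V) = p ^ n :=
    ⟨_, (Module.natCard_eq_pow_finrank (K := ZMod p) (V := V)).trans (by rw [Nat.card_zmod])⟩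
  have hVp : IsPGroup p (Multiplicative V) := IsPGroup.of_card hVcard
  have hCq : IsPGroup q C := IsPGroup.of_card (n := 1) (by rw [hcard, pow_one])
  have hφ : (addAutToMulAut V).comp (DistribMulAction.toAddAut C V) ≠ 1 := by
    obtain ⟨c, hc⟩ := exists_ne (1 : C)
    exact fun h ↦ hc (hfaithful c fun v ↦ congr($h c (.ofAdd v)))
  refine ⟨⟨inferInstance,
    fun hnil ↦ hφ (SemidirectProduct.eq_one_of_isNilpotent hpq hVp hCq hnil),
    fun H hH ↦ SemidirectProduct.isNilpotent_of_ne_top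
      (eq_bot_or_eq_top_of_forall_smul_mem hirr) hH⟩, ?_, ?_⟩
  · intro r hr hdvd
    rw [SemidirectProduct.card, hVcard, hcard] at hdvd
    rcases hr.dvd_mul.mp hdvd with h | h
    · exact .inl ((Nat.prime_dvd_prime_iff_eq hr hp).mp (hr.dvd_of_dvd_pow h))
    · exact .inr ((Nat.prime_dvd_prime_iff_eq hr hq).mp h)
  · intro P
    have hpC : ¬ p ∣ Nat.card C := hcard ▸ (Nat.prime_dvd_prime_iff_eq hp hq).not.mpr hpq
    rw [SemidirectProduct.sylow_eq_range_inl hVp hpC P]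
    infer_instance

theorem statement_9 (p q : ℕ) (hp : p.Prime) (hq : q.Prime) (hpq : p ≠ q)
    (V : Type) [AddCommGroup V] [Module (ZMod p) V] [Module.Finite (ZMod p) V] [Nontrivial V]
    (C : Type) [Group C] (hC : IsCyclic C) (hcard : Nat.card C = q)
    [DistribMulAction C V] [SMulCommClass C (ZMod p) V]
    (hfaithful : ∀ c : C, (∀ v : V, c • v = v) → c = 1)
    (hirr : ∀ W : Submodule (ZMod p) V, (∀ c : C, ∀ v ∈ W, c • v ∈ W) → W = ⊥ ∨ W = ⊤) :
    IsSchmidtPQGroup p q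
      (SemidirectProduct (Multiplicative V) C
        ((addAutToMulAut V).comp (DistribMulAction.toAddAut C V))) :=
  statement_9_general p q hp hq hpq V C hC hcard hfaithful hirr
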